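/- Let M ≥ 1, V = {0,…,2^M-1}, and δ(u,v) the most significant binary bit where u,v differ. Suppose A = {v₁ < ⋯ < v_n} ⊆ V with n = 2^s and φ₂ is a 3-coloring of pairs of {0,…,M-1} such that φ₂(δ(v_i,v_j), δ(v_j,v_k)) = α for some fixed color α for every triple v_i < v_j < v_k in A. Then there is a set S of s distinct elements of {0,…,M-1} such that φ₂ assigns the color α to every pair from S. -/

import Mathlib

/-!
Write `d i j` for the highest bit in which `v i` and `v j` differ. For `i < j < k` one has
`d i k = max (d i j) (d j k)` and `d i j ≠ d j k` (bit `d i j` of `v j` is set, bit `d j k` is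
not). Hence a block `v a < ⋯ < v c` splits into two runs such that `d` is below `D = d a c` inside
each run and equals `D` across them. One run is at least half as long as the block; recursing
into it `s` times collects `s` distinct levels, and a new level `D` gets colour `α` with every
level `d i j` found inside the run, through the triple `(i, j, c)` or `(a, i, j)`.
-/

def IsHighestDifferingBit (δ : ℕ → ℕ → ℕ) : Prop :=
  ∀ u v : ℕ, u ≠ v →
    (u.testBit (δ u v) ≠ v.testBit (δ u v) ∧ ∀ i, u.testBit i ≠ v.testBit i → i ≤ δ u v)

namespace IsHighestDifferingBit

variable {δ : ℕ → ℕ → ℕ} {u v w : ℕ}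

theorem lt_iff_shiftRight_eq (hδ : IsHighestDifferingBit δ) (huv : u ≠ v) (k : ℕ) :
    δ u v < k ↔ u >>> k = v >>> k := by
  constructor
  · intro hk
    apply Nat.eq_of_testBit_eq
    intro i
    simp only [Nat.testBit_shiftRight]
    by_contra h
    have := (hδ u v huv).2 _ h
    omega
  · intro h
    by_contra! hk
    apply (hδ u v huv).1
    simpa [Nat.testBit_shiftRight, Nat.add_sub_cancel' hk] using
      congrArg (Nat.testBit · (δ u v - k)) h

theorem lt_of_lt_two_pow (hδ : IsHighestDifferingBit δ) (huv : u ≠ v) {M : ℕ} (hu : u < 2 ^ M)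
    (hv : v < 2 ^ M) :
    δ u v < M := by
  rw [hδ.lt_iff_shiftRight_eq huv, Nat.shiftRight_eq_div_pow, Nat.shiftRight_eq_div_pow,
    Nat.div_eq_of_lt hu, Nat.div_eq_of_lt hv]

theorem testBit_of_lt (hδ : IsHighestDifferingBit δ) (huv : u < v) :
    u.testBit (δ u v) = false ∧ v.testBit (δ u v) = true := by
  obtain ⟨hdiff, hmax⟩ := hδ u v huv.ne
  cases hu : u.testBit (δ u v)
  · exact ⟨rfl, by simpa [hu] using hdiff.symm⟩
  · have hv : v.testBit (δ u v) = false := by simpa [hu] using hdiff.symm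
    have habove : ∀ i, δ u v < i → v.testBit i = u.testBit i := fun i hi => by
      by_contra h
      exact hi.not_ge (hmax i (Ne.symm h))
    exact absurd (Nat.lt_of_testBit _ hv hu habove) huv.not_gt

theorem ne_of_lt_of_lt (hδ : IsHighestDifferingBit δ) (huv : u < v) (hvw : v < w) :
    δ u v ≠ δ v w := by
  intro h
  have h₁ := (hδ.testBit_of_lt huv).2
  have h₂ := (hδ.testBit_of_lt hvw).1
  rw [h] at h₁
  simp [h₁] at h₂

theorem eq_max_of_lt_of_lt (hδ : IsHighestDifferingBit δ) (huv : u < v) (hvw : v < w) :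
    δ u w = max (δ u v) (δ v w) := by
  have huw := huv.trans hvw
  have hmono : ∀ k, u >>> k ≤ v >>> k ∧ v >>> k ≤ w >>> k := fun k => by
    simp only [Nat.shiftRight_eq_div_pow]
    exact ⟨Nat.div_le_div_right huv.le, Nat.div_le_div_right hvw.le⟩
  apply le_antisymm
  · rw [← Nat.lt_add_one_iff, hδ.lt_iff_shiftRight_eq huw.ne]
    rw [(hδ.lt_iff_shiftRight_eq huv.ne _).1 (Nat.lt_add_one_of_le (le_max_left _ _)),
      (hδ.lt_iff_shiftRight_eq hvw.ne _).1 (Nat.lt_add_one_of_le (le_max_right _ _))]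
  · have hk := (hδ.lt_iff_shiftRight_eq huw.ne (δ u w + 1)).1 (lt_add_one _)
    obtain ⟨h₁, h₂⟩ := hmono (δ u w + 1)
    refine max_le ?_ ?_ <;> rw [← Nat.lt_add_one_iff]
    · exact (hδ.lt_iff_shiftRight_eq huv.ne _).2 (by omega)
    · exact (hδ.lt_iff_shiftRight_eq hvw.ne _).2 (by omega)

end IsHighestDifferingBit

structure IsBinaryHierarchy {ι : Type*} [LinearOrder ι] (d : ℕ → ℕ → ι) (n : ℕ) : Prop where
  eq_max : ∀ i j k, i < j → j < k → k < n → d i k = max (d i j) (d j k)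
  ne : ∀ i j k, i < j → j < k → k < n → d i j ≠ d j k

namespace IsBinaryHierarchy

variable {ι β : Type*} [LinearOrder ι] {d : ℕ → ℕ → ι} {n : ℕ}

theorem le_of_le_of_le (hd : IsBinaryHierarchy d n) {a i j c : ℕ} (hai : a ≤ i) (hij : i < j)
    (hjc : j ≤ c) (hc : c < n) : d i j ≤ d a c := by
  have hleft : d i j ≤ d a j := by
    rcases hai.eq_or_lt with rfl | hai
    · exact le_rfl
    · rw [hd.eq_max a i j hai hij (by omega)]
      exact le_max_right _ _
  rcases hjc.eq_or_lt with rfl | hjc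
  · exact hleft
  · rw [hd.eq_max a j c (by omega) hjc hc]
    exact hleft.trans (le_max_left _ _)

theorem exists_split (hd : IsBinaryHierarchy d n) {a c : ℕ} (hac : a < c) (hc : c < n) :
    ∃ m, a < m ∧ m ≤ c ∧
      (∀ i j, a ≤ i → i < j → j < m → d i j < d a c) ∧
      (∀ i j, m ≤ i → i < j → j ≤ c → d i j < d a c) ∧
      (∀ i j, a ≤ i → i < m → m ≤ j → j ≤ c → d i j = d a c) := by
  have hex : ∃ m, a < m ∧ m ≤ c ∧ d a m = d a c := ⟨c, hac, le_rfl, rfl⟩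
  obtain ⟨ham, hmc, hm⟩ := Nat.find_spec hex
  set m := Nat.find hex
  have hleft : ∀ i j, a ≤ i → i < j → j < m → d i j < d a c := by
    intro i j hai hij hjm
    have hj : d a j ≠ d a c := fun h => Nat.find_min hex hjm ⟨by omega, by omega, h⟩
    exact (hd.le_of_le_of_le hai hij le_rfl (by omega)).trans_lt
      ((hd.le_of_le_of_le le_rfl (by omega) (by omega) hc).lt_of_ne hj)
  have hright : ∀ i j, m ≤ i → i < j → j ≤ c → d i j < d a c := by
    intro i j hmi hij hjc
    have hmc : m < c := by omega
    have hmax := hd.eq_max a m c ham hmc hc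
    have hne := hd.ne a m c ham hmc hc
    rw [hm] at hmax hne
    have hmc_lt : d m c < d a c := (hmax ▸ le_max_right _ _).lt_of_ne hne.symm
    exact (hd.le_of_le_of_le hmi hij hjc hc).trans_lt hmc_lt
  refine ⟨m, ham, hmc, hleft, hright, fun i j hai him hmj hjc => ?_⟩
  have haj : d a j = d a c :=
    le_antisymm (hd.le_of_le_of_le le_rfl (by omega) hjc hc)
      (hm ▸ hd.le_of_le_of_le le_rfl ham hmj (by omega))
  rcases hai.eq_or_lt with rfl | hai
  · exact haj
  · have hmax := hd.eq_max a i j hai (by omega) (by omega)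
    rw [haj] at hmax
    have hlt := hleft a i le_rfl hai him
    rw [hmax] at hlt ⊢
    exact (max_eq_right ((lt_max_iff.mp hlt).resolve_left (lt_irrefl _)).le).symm

theorem exists_subblock (hd : IsBinaryHierarchy d n) {col : Finset ι → β} {α : β}
    (hcol : ∀ i j k, i < j → j < k → k < n → col {d i j, d j k} = α) {t lo hi : ℕ}
    (hlen : lo + 2 ^ (t + 1) ≤ hi) (hhi : hi ≤ n) :
    ∃ lo' hi', lo ≤ lo' ∧ lo' + 2 ^ t ≤ hi' ∧ hi' ≤ hi ∧
      ∀ i j, lo' ≤ i → i < j → j < hi' →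
        d i j < d lo (hi - 1) ∧ col {d i j, d lo (hi - 1)} = α := by
  have h2t : 2 ^ (t + 1) = 2 ^ t + 2 ^ t := by rw [pow_succ]; ring
  have hpos := Nat.one_le_two_pow (n := t)
  obtain ⟨m, hlom, hm, hleft, hright, hcross⟩ :=
    hd.exists_split (a := lo) (c := hi - 1) (by omega) (by omega)
  by_cases hbig : lo + 2 ^ t ≤ m
  · refine ⟨lo, m, le_rfl, hbig, by omega, fun i j hloi hij hjm => ⟨hleft i j hloi hij hjm, ?_⟩⟩
    rw [← hcross j (hi - 1) (by omega) hjm hm le_rfl]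
    exact hcol i j (hi - 1) hij (by omega) (by omega)
  · refine ⟨m, hi, by omega, by omega, le_rfl, fun i j hmi hij hjhi =>
      ⟨hright i j hmi hij (by omega), ?_⟩⟩
    rw [Finset.pair_comm, ← hcross lo i le_rfl hlom hmi (by omega)]
    exact hcol lo i j (by omega) hij (by omega)

theorem exists_pairwise_of_triples (hd : IsBinaryHierarchy d n) {col : Finset ι → β} {α : β}
    (hcol : ∀ i j k, i < j → j < k → k < n → col {d i j, d j k} = α) (t : ℕ) :
    ∀ lo hi, lo + 2 ^ t ≤ hi → hi ≤ n →
      ∃ S : Finset ι, S.card = t ∧ (∀ b ∈ S, ∃ i j, lo ≤ i ∧ i < j ∧ j < hi ∧ d i j = b) ∧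
        (S : Set ι).Pairwise fun a b => col {a, b} = α := by
  induction t with
  | zero => exact fun _ _ _ _ => ⟨∅, rfl, by simp, by simp⟩
  | succ t ih =>
    intro lo hi hlen hhi
    have hpos := Nat.one_le_two_pow (n := t + 1)
    obtain ⟨lo', hi', hlo, hlen', hhi', hsub⟩ := hd.exists_subblock hcol hlen hhi
    obtain ⟨S, hcard, hwit, hpair⟩ := ih lo' hi' hlen' (by omega)
    have hS : ∀ b ∈ S, b < d lo (hi - 1) ∧ col {b, d lo (hi - 1)} = α := by
      intro b hb
      obtain ⟨i, j, hlo'i, hij, hjhi', rfl⟩ := hwit b hb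
      exact hsub i j hlo'i hij hjhi'
    refine ⟨insert (d lo (hi - 1)) S, ?_, ?_, ?_⟩
    · rw [Finset.card_insert_of_notMem fun h => lt_irrefl _ (hS _ h).1, hcard]
    · simp only [Finset.mem_insert, forall_eq_or_imp]
      refine ⟨⟨lo, hi - 1, le_rfl, by omega, by omega, rfl⟩, fun b hb => ?_⟩
      obtain ⟨i, j, hlo'i, hij, hjhi', rfl⟩ := hwit b hb
      exact ⟨i, j, by omega, hij, by omega, rfl⟩
    · rw [Finset.coe_insert]
      exact hpair.insert fun b hb _ => ⟨by rw [Finset.pair_comm]; exact (hS b hb).2, (hS b hb).2⟩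

end IsBinaryHierarchy

theorem stmt_17_general (M : ℕ) (δ : ℕ → ℕ → ℕ)
    (hδ : ∀ u v : ℕ, u ≠ v →
      (Nat.testBit u (δ u v) ≠ Nat.testBit v (δ u v) ∧
        ∀ i, Nat.testBit u i ≠ Nat.testBit v i → i ≤ δ u v))
    (s n : ℕ) (hn : n = 2 ^ s)
    (v : ℕ → ℕ) (hmono : ∀ i j, i < j → j < n → v i < v j)
    (hbound : ∀ i, i < n → v i < 2 ^ M)
    (φ₂ : Finset ℕ → Fin 3) (α : Fin 3)
    (hcol : ∀ i j k, i < j → j < k → k < n →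
      φ₂ {δ (v i) (v j), δ (v j) (v k)} = α) :
    ∃ S : Finset ℕ, S ⊆ Finset.range M ∧ S.card = s ∧
      ∀ a ∈ S, ∀ b ∈ S, a ≠ b → φ₂ {a, b} = α := by
  replace hδ : IsHighestDifferingBit δ := hδ
  have hd : IsBinaryHierarchy (fun i j => δ (v i) (v j)) n :=
    ⟨fun i j k hij hjk hk => hδ.eq_max_of_lt_of_lt (hmono i j hij (by omega)) (hmono j k hjk hk),
      fun i j k hij hjk hk => hδ.ne_of_lt_of_lt (hmono i j hij (by omega)) (hmono j k hjk hk)⟩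
  obtain ⟨S, hcard, hwit, hpair⟩ := hd.exists_pairwise_of_triples hcol s 0 n (by omega) le_rfl
  refine ⟨S, fun b hb => ?_, hcard, hpair⟩
  obtain ⟨i, j, -, hij, hjn, rfl⟩ := hwit b hb
  exact Finset.mem_range.2 <|
    hδ.lt_of_lt_two_pow (hmono i j hij hjn).ne (hbound i (by omega)) (hbound j hjn)

/-- if A = {v₁ < ⋯ < v_n} ⊆ {0,…,2^M-1} with n = 2^s and every triple of A
gets the same φ₂-color α on the pair of most-significant-differing-bit values, then there are
s distinct elements of {0,…,M-1} all of whose pairs get color α under φ₂. -/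
theorem stmt_17 (M : ℕ) (hM : 1 ≤ M) (δ : ℕ → ℕ → ℕ)
    (hδ : ∀ u v : ℕ, u ≠ v →
      (Nat.testBit u (δ u v) ≠ Nat.testBit v (δ u v) ∧
        ∀ i, Nat.testBit u i ≠ Nat.testBit v i → i ≤ δ u v))
    (s n : ℕ) (hs : 2 ≤ s) (hn : n = 2 ^ s)
    (v : ℕ → ℕ) (hmono : ∀ i j, i < j → j < n → v i < v j)
    (hbound : ∀ i, i < n → v i < 2 ^ M)
    (φ₂ : Finset ℕ → Fin 3) (α : Fin 3)
    (hcol : ∀ i j k, i < j → j < k → k < n →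
      φ₂ {δ (v i) (v j), δ (v j) (v k)} = α) :
    ∃ S : Finset ℕ, S ⊆ Finset.range M ∧ S.card = s ∧
      ∀ a ∈ S, ∀ b ∈ S, a ≠ b → φ₂ {a, b} = α :=
  stmt_17_general M δ hδ s n hn v hmono hbound φ₂ α hcol
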